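/- arXiv:1408.4723 — 5 statements merged into one kernel-verified Lean document; each statement's English description precedes it below -/
import Mathlib

section
/- Let C be a real constant, Q(x,y,t) = (x²+y²)³ + 3(x⁴+y⁴) + 18x²y² + 9(x²+y²) + 9(C−t)² + (6x³ − 18xy² − 18x)(C−t), and U(x,y,t) = −3((x²+y²+3)(x²−y²) − 6x(C−t))/Q(x,y,t). Then U is real-analytic on ℝ³ \ {(0,0,C)}. -/
/-- The denominator polynomial `Q(x,y,t)` depending on the real constant `C`. -/
def Q (C x y t : ℝ) : ℝ :=
  (x^2 + y^2)^3 + 3*(x^4 + y^4) + 18*x^2*y^2 + 9*(x^2 + y^2)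
    + 9*(C - t)^2 + (6*x^3 - 18*x*y^2 - 18*x)*(C - t)

/-- The potential `U(x,y,t)` of the mNV solution. -/
noncomputable def U (C x y t : ℝ) : ℝ :=
  -(3 * ((x^2 + y^2 + 3) * (x^2 - y^2) - 6*x*(C - t))) / Q C x y t

lemma Q_sos (C x y t : ℝ) :
    Q C x y t = (3*(C-t) + x*(x^2 - 3*y^2 - 3))^2 + (y*(y^2 - 3*x^2))^2
      + 9*x^4 + 3*y^4 + 9*y^2 := by
  simp only [Q]; ring

lemma Q_ne_zero (C x y t : ℝ) (h : (x, y, t) ≠ ((0 : ℝ), (0 : ℝ), C)) :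
    Q C x y t ≠ 0 := by
  rw [Q_sos]
  intro h0
  have hx : x = 0 := by
    have : x^4 = 0 := by
      nlinarith [sq_nonneg (3*(C-t) + x*(x^2 - 3*y^2 - 3)), sq_nonneg (y*(y^2 - 3*x^2)),
        sq_nonneg (x^2), sq_nonneg y, sq_nonneg (y^2)]
    exact pow_eq_zero_iff (by norm_num) |>.mp this
  have hy : y = 0 := by
    have : y^2 = 0 := by
      nlinarith [sq_nonneg (3*(C-t) + x*(x^2 - 3*y^2 - 3)), sq_nonneg (y*(y^2 - 3*x^2)),
        sq_nonneg (x^2), sq_nonneg (y^2)]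
    exact pow_eq_zero_iff (by norm_num) |>.mp this
  have ht : t = C := by
    subst hx; subst hy
    nlinarith [sq_nonneg (C - t)]
  exact h (by simp [hx, hy, ht])

theorem U_realAnalytic_off_singularity (C : ℝ) :
    AnalyticOnNhd ℝ (fun p : ℝ × ℝ × ℝ => U C p.1 p.2.1 p.2.2)
      {p : ℝ × ℝ × ℝ | p ≠ (0, 0, C)} := by
  intro p hp
  have hfst : AnalyticAt ℝ (fun p : ℝ × ℝ × ℝ => p.1) p := analyticAt_fst
  have h21 : AnalyticAt ℝ (fun p : ℝ × ℝ × ℝ => p.2.1) p :=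
    analyticAt_fst.comp analyticAt_snd
  have h22 : AnalyticAt ℝ (fun p : ℝ × ℝ × ℝ => p.2.2) p :=
    analyticAt_snd.comp analyticAt_snd
  have hC : AnalyticAt ℝ (fun _ : ℝ × ℝ × ℝ => C) p := analyticAt_const
  have hs : AnalyticAt ℝ (fun p : ℝ × ℝ × ℝ => C - p.2.2) p := hC.sub h22
  have hQ : AnalyticAt ℝ (fun p : ℝ × ℝ × ℝ => Q C p.1 p.2.1 p.2.2) p := by
    simp only [Q]
    exact (((((((hfst.pow 2).add (h21.pow 2)).pow 3).add
      (analyticAt_const.mul ((hfst.pow 4).add (h21.pow 4)))).add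
      ((analyticAt_const.mul (hfst.pow 2)).mul (h21.pow 2))).add
      (analyticAt_const.mul ((hfst.pow 2).add (h21.pow 2)))).add
      (analyticAt_const.mul (hs.pow 2))).add
      ((((analyticAt_const.mul (hfst.pow 3)).sub
        ((analyticAt_const.mul hfst).mul (h21.pow 2))).sub
        (analyticAt_const.mul hfst)).mul hs)
  have hN : AnalyticAt ℝ
      (fun p : ℝ × ℝ × ℝ =>
        -(3 * ((p.1^2 + p.2.1^2 + 3) * (p.1^2 - p.2.1^2) - 6*p.1*(C - p.2.2)))) p :=
    (analyticAt_const.mul (((((hfst.pow 2).add (h21.pow 2)).add analyticAt_const).mul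
      ((hfst.pow 2).sub (h21.pow 2))).sub
      ((analyticAt_const.mul hfst).mul hs))).neg
  have hne : Q C p.1 p.2.1 p.2.2 ≠ 0 := by
    apply Q_ne_zero
    intro hcontra
    apply hp
    have : p = (p.1, p.2.1, p.2.2) := rfl
    rw [this, hcontra]
  exact hN.div hQ hne
end

section
/- Let C be a real constant, Q(x,y,t) = (x²+y²)³ + 3(x⁴+y⁴) + 18x²y² + 9(x²+y²) + 9(C−t)² + (6x³ − 18xy² − 18x)(C−t), and U(x,y,t) = −3((x²+y²+3)(x²−y²) − 6x(C−t))/Q(x,y,t). Then for every fixed angle φ ∈ ℝ, the limit of U(r cos φ, r sin φ, C) as r → 0⁺ exists and equals −cos 2φ. -/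
open Filter Topology Real

theorem U_radial_limits_at_singularity (C : ℝ) (φ : ℝ) :
    Filter.Tendsto (fun r : ℝ => U C (r * Real.cos φ) (r * Real.sin φ) C)
      (nhdsWithin 0 (Set.Ioi 0)) (nhds (-(Real.cos (2 * φ)))) := by
  set c := Real.cos φ with hcdef
  set s := Real.sin φ with hsdef
  have hpyth : s^2 + c^2 = 1 := Real.sin_sq_add_cos_sq φ
  have h2c : Real.cos (2*φ) = 2*c^2 - 1 := Real.cos_two_mul φ
  have h2s : Real.sin (2*φ) = 2*s*c := Real.sin_two_mul φ
  set g : ℝ → ℝ := fun r =>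
    (-(3*(r^2+3)*Real.cos (2*φ))) / (r^4 + 3*r^2*(1+(Real.sin (2*φ))^2) + 9)
    with hg
  have hgt : Filter.Tendsto g (nhdsWithin 0 (Set.Ioi 0))
      (nhds (-(Real.cos (2*φ)))) := by
    have hnum : Filter.Tendsto (fun r : ℝ => -(3*(r^2+3)*Real.cos (2*φ)))
        (nhdsWithin 0 (Set.Ioi 0)) (nhds (-(9*Real.cos (2*φ)))) := by
      have hc : Tendsto (fun r : ℝ => -(3*(r^2+3)*Real.cos (2*φ))) (nhds 0)
          (nhds (-(9*Real.cos (2*φ)))) := by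
        have := (Continuous.tendsto (by continuity :
          Continuous (fun r : ℝ => -(3*(r^2+3)*Real.cos (2*φ)))) 0)
        convert this using 2
        norm_num
      exact hc.mono_left nhdsWithin_le_nhds
    have hden : Filter.Tendsto
        (fun r : ℝ => r^4 + 3*r^2*(1+(Real.sin (2*φ))^2) + 9)
        (nhdsWithin 0 (Set.Ioi 0)) (nhds 9) := by
      have hc : Tendsto (fun r : ℝ => r^4 + 3*r^2*(1+(Real.sin (2*φ))^2) + 9)
          (nhds 0) (nhds 9) := by
        have := (Continuous.tendsto (by continuity :
          Continuous (fun r : ℝ => r^4 + 3*r^2*(1+(Real.sin (2*φ))^2) + 9)) 0)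
        convert this using 2
        norm_num
      exact hc.mono_left nhdsWithin_le_nhds
    have h9 : (9:ℝ) ≠ 0 := by norm_num
    have := hnum.div hden h9
    have heq : -(9*Real.cos (2*φ))/9 = -(Real.cos (2*φ)) := by ring
    rw [heq] at this
    exact this
  refine hgt.congr' ?_
  filter_upwards [self_mem_nhdsWithin] with r hr
  have hr0 : r ≠ 0 := ne_of_gt hr
  have hden_eq : Q C (r*c) (r*s) C =
      r^2 * (r^4 + 3*r^2*(1+(Real.sin (2*φ))^2) + 9) := by
    unfold Q
    rw [h2s]
    linear_combination (r^6*((s^2+c^2)^2+(s^2+c^2)+1)+3*r^4*((s^2+c^2)+1)+9*r^2) * hpyth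
  have hnum_eq : -(3 * (((r*c)^2 + (r*s)^2 + 3) * ((r*c)^2 - (r*s)^2)
      - 6*(r*c)*(C - C))) = r^2 * (-(3*(r^2+3)*Real.cos (2*φ))) := by
    rw [h2c]
    linear_combination (-3*r^2*(r^2*(c^2-s^2)-r^2-3)) * hpyth
  show g r = U C (r*c) (r*s) C
  unfold U
  rw [hnum_eq, hden_eq, mul_div_mul_left _ _ (pow_ne_zero 2 hr0)]
end

section
/- Let C be a real constant, z = x + iy, γ = i(x²−y²), δ = y(1+x²−y²/3) − i[x(1+y²−x²/3) + C − t], U(x,y,t) = −3((x²+y²+3)(x²−y²) − 6x(C−t))/Q(x,y,t) with Q(x,y,t) = (x²+y²)³ + 3(x⁴+y⁴) + 18x²y² + 9(x²+y²) + 9(C−t)² + (6x³ − 18xy² − 18x)(C−t), and V = (z(γ̄−γ) − δz² − δ̄)²/(|γ|²+|δ|²)² + 2U/(1+|z|²) − 2iz(z(γ̄−γ) − δz² − δ̄)/((|γ|²+|δ|²)(1+|z|²)). Then for every fixed t ∈ ℝ, |V(x,y,t)| = O(r⁻²) as r = √(x²+y²) → ∞; that is, there exist constants K > 0 and R > 0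 (depending on t and C) such that |V(x,y,t)| ≤ K/(x²+y²) whenever x²+y² ≥ R². -/
open Complex

/-- `γ(x,y) = i(x² − y²)`. -/
noncomputable def gammaF (x y : ℝ) : ℂ := Complex.I * ((x^2 - y^2 : ℝ) : ℂ)

/-- `δ(x,y,t) = y(1 + x² − y²/3) − i[x(1 + y² − x²/3) + C − t]`. -/
noncomputable def deltaF (C x y t : ℝ) : ℂ :=
  ((y * (1 + x^2 - y^2/3) : ℝ) : ℂ)
    - Complex.I * ((x * (1 + y^2 - x^2/3) + C - t : ℝ) : ℂ)

/-- The auxiliary function `V(x,y,t)` accompanying `U` in the mNV equation. -/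
noncomputable def V (C x y t : ℝ) : ℂ :=
  let z : ℂ := (x : ℂ) + Complex.I * (y : ℂ)
  let g : ℂ := gammaF x y
  let d : ℂ := deltaF C x y t
  let w : ℂ := z * (starRingEnd ℂ g - g) - d * z^2 - starRingEnd ℂ d
  let D : ℂ := ((‖g‖ ^ 2 + ‖d‖ ^ 2 : ℝ) : ℂ)
  w^2 / D^2 + 2 * ((U C x y t : ℝ) : ℂ) / ((1 + ‖z‖ ^ 2 : ℝ) : ℂ)
    - 2 * Complex.I * z * w / (D * ((1 + ‖z‖ ^ 2 : ℝ) : ℂ))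

/-- Partial derivative in `x` of a function of `(x,y,t)`. -/
noncomputable def pdx (f : ℝ → ℝ → ℝ → ℂ) : ℝ → ℝ → ℝ → ℂ :=
  fun x y t => deriv (fun s => f s y t) x

/-- Partial derivative in `y` of a function of `(x,y,t)`. -/
noncomputable def pdy (f : ℝ → ℝ → ℝ → ℂ) : ℝ → ℝ → ℝ → ℂ :=
  fun x y t => deriv (fun s => f x s t) y

/-- Partial derivative in `t` of a function of `(x,y,t)`. -/
noncomputable def pdt (f : ℝ → ℝ → ℝ → ℂ) : ℝ → ℝ → ℝ → ℂ :=
  fun x y t => deriv (fun s => f x y s) t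

/-- The Wirtinger derivative `∂ = (1/2)(∂/∂x − i ∂/∂y)`. -/
noncomputable def wd (f : ℝ → ℝ → ℝ → ℂ) : ℝ → ℝ → ℝ → ℂ :=
  fun x y t => (pdx f x y t - Complex.I * pdy f x y t) / 2

/-- The conjugate Wirtinger derivative `∂̄ = (1/2)(∂/∂x + i ∂/∂y)`. -/
noncomputable def wdb (f : ℝ → ℝ → ℝ → ℂ) : ℝ → ℝ → ℝ → ℂ :=
  fun x y t => (pdx f x y t + Complex.I * pdy f x y t) / 2


private lemma Dlb (x y c : ℝ) (h1 : (1:ℝ) ≤ x^2+y^2) (h2 : 1476*c^2 + 1 ≤ x^2+y^2) :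
    (x^2+y^2)^3/36 ≤ (x^2-y^2)^2 + (y*(1+x^2-y^2/3))^2 + (x*(1+y^2-x^2/3)+c)^2 := by
  nlinarith [sq_nonneg (x-c), sq_nonneg (x*y^2/6 - 6*c), sq_nonneg (x^3/6 - 2*c),
    sq_nonneg (x*y^2/6 + 6*c), sq_nonneg (x^3/6 + 2*c), sq_nonneg (x*y), sq_nonneg x, sq_nonneg y,
    sq_nonneg (x^2-y^2), sq_nonneg (x^2+y^2), mul_nonneg (mul_nonneg (sq_nonneg x) (sq_nonneg y)) (sq_nonneg x),
    sq_nonneg c, mul_le_mul h1 h1 (by positivity) (by positivity)]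

private lemma Qlb (x y c : ℝ) (h1 : (1:ℝ) ≤ x^2+y^2) (h2 : 1476*c^2 + 1 ≤ x^2+y^2) :
    (x^2+y^2)^3/4 ≤ (x^2+y^2)^3 + 3*(x^4+y^4) + 18*x^2*y^2 + 9*(x^2+y^2) + 9*c^2 + (6*x^3-18*x*y^2-18*x)*c := by
  have hc3 : 1476*c^2 + 1 ≤ (x^2+y^2)^3 :=
    h2.trans (by nlinarith [sq_nonneg (x^2+y^2), mul_le_mul h1 h1 (by positivity) (by positivity)])
  nlinarith [sq_nonneg (x^3/4 - 12*c), sq_nonneg (x^3/4 + 12*c), sq_nonneg (x*y^2/2 - 18*c),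
    sq_nonneg (x*y^2/2 + 18*c), sq_nonneg (x - 9*c), sq_nonneg (x + 9*c), sq_nonneg c,
    sq_nonneg x, sq_nonneg y, sq_nonneg (x*y),
    mul_nonneg (mul_nonneg (sq_nonneg x) (sq_nonneg y)) (sq_nonneg y),
    mul_nonneg (mul_nonneg (sq_nonneg x) (sq_nonneg x)) (sq_nonneg y)]

set_option maxHeartbeats 1000000 in
private lemma Wub (x y c : ℝ) (h1 : (1:ℝ) ≤ x^2+y^2) (h2 : 1476*c^2 + 1 ≤ x^2+y^2) :
    (-(y*(1+2*x^2+(2/3)*y^2+(x^2+y^2)^2/3+2*x*c)))^2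
      + (-(x*(1+2*y^2+(2/3)*x^2+(x^2+y^2)^2/3)+c*(1+y^2-x^2)))^2
      ≤ (64+16*c^2)*(x^2+y^2)^5 := by
  have hs : (0:ℝ) < x^2+y^2 := by linarith
  have hx : x^2 ≤ x^2+y^2 := by nlinarith [sq_nonneg y]
  have hy : y^2 ≤ x^2+y^2 := by nlinarith [sq_nonneg x]
  have hc2 : c^2 ≤ x^2+y^2 := by nlinarith [sq_nonneg c]
  set s := x^2+y^2 with hsdef
  set Gy : ℝ := 1+2*x^2+(2/3)*y^2+s^2/3 with hGy
  set Gx : ℝ := 1+2*y^2+(2/3)*x^2+s^2/3 with hGx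
  set H : ℝ := 1+y^2-x^2 with hH
  have hGy0 : 0 ≤ Gy := by rw [hGy]; positivity
  have hGx0 : 0 ≤ Gx := by rw [hGx]; positivity
  have hGyb : Gy ≤ 4*s^2 := by rw [hGy]; nlinarith
  have hGxb : Gx ≤ 4*s^2 := by rw [hGx]; nlinarith
  have hHb : H^2 ≤ 4*s^2 := by rw [hH]; nlinarith
  have hs25 : s^2 ≤ s^5 := pow_le_pow_right₀ h1 (by norm_num)
  have hs35 : s^3 ≤ s^5 := pow_le_pow_right₀ h1 (by norm_num)
  have t1 : (-(y*(Gy+2*x*c)))^2 ≤ 2*(y^2*Gy^2) + 8*(x^2*y^2*c^2) := by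
    nlinarith [sq_nonneg (y*(Gy-2*x*c))]
  have t2 : (-(x*Gx+c*H))^2 ≤ 2*(x^2*Gx^2) + 2*(c^2*H^2) := by
    nlinarith [sq_nonneg (x*Gx-c*H)]
  have hy2Gy : y^2*Gy^2 ≤ 16*s^5 := by
    calc y^2*Gy^2 ≤ s*(4*s^2)^2 := mul_le_mul hy (pow_le_pow_left₀ hGy0 hGyb 2) (sq_nonneg Gy) hs.le
      _ = 16*s^5 := by ring
  have hx2Gx : x^2*Gx^2 ≤ 16*s^5 := by
    calc x^2*Gx^2 ≤ s*(4*s^2)^2 := mul_le_mul hx (pow_le_pow_left₀ hGx0 hGxb 2) (sq_nonneg Gx) hs.le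
      _ = 16*s^5 := by ring
  have a1 : x^2*y^2 ≤ s^2 := by
    calc x^2*y^2 ≤ s*s := mul_le_mul hx hy (sq_nonneg y) hs.le
      _ = s^2 := (sq s).symm
  have a2 : x^2*y^2*c^2 ≤ s^5*c^2 := by
    have := mul_le_mul_of_nonneg_right (a1.trans hs25) (sq_nonneg c)
    linarith
  have a3 : c^2*H^2 ≤ 4*(s^5*c^2) := by
    have h4 : c^2*H^2 ≤ c^2*(4*s^2) := mul_le_mul_of_nonneg_left hHb (sq_nonneg c)
    have h5 : c^2*(4*s^2) ≤ c^2*(4*s^5) := by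
      have := mul_le_mul_of_nonneg_left hs25 (by positivity : (0:ℝ) ≤ 4*c^2)
      linarith
    linarith
  linarith [t1, t2, hy2Gy, hx2Gx, a2, a3]

set_option maxHeartbeats 1000000 in
theorem V_decay (C : ℝ) (t : ℝ) :
    ∃ K > (0 : ℝ), ∃ R > (0 : ℝ), ∀ x y : ℝ,
      R^2 ≤ x^2 + y^2 → ‖V C x y t‖ ≤ K / (x^2 + y^2) := by
  set c : ℝ := C - t with hcdef
  have hB0 : (0:ℝ) < 64 + 16*c^2 := by positivity
  set B : ℝ := Real.sqrt (64 + 16*c^2) with hBdef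
  have hBpos : 0 < B := Real.sqrt_pos.mpr hB0
  have hBsq : B^2 = 64 + 16*c^2 := Real.sq_sqrt hB0.le
  refine ⟨1296*(64+16*c^2) + 240 + 72*B, by positivity,
    Real.sqrt (1 + 1476*c^2), Real.sqrt_pos.mpr (by positivity), fun x y hR => ?_⟩
  rw [Real.sq_sqrt (by positivity : (0:ℝ) ≤ 1 + 1476*c^2)] at hR
  have h2 : 1476*c^2 + 1 ≤ x^2+y^2 := by linarith
  have h1 : (1:ℝ) ≤ x^2 + y^2 := by nlinarith [sq_nonneg c]
  have hspos : (0:ℝ) < x^2+y^2 := by linarith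
  set z : ℂ := (x:ℂ) + Complex.I*(y:ℂ) with hzdef
  set g : ℂ := gammaF x y with hgdef
  set d : ℂ := deltaF C x y t with hddef
  set w : ℂ := z * (starRingEnd ℂ g - g) - d * z^2 - starRingEnd ℂ d with hwdef
  set Dv : ℝ := ‖g‖ ^ 2 + ‖d‖ ^ 2 with hDdef
  have hV : V C x y t = w^2/((Dv:ℝ):ℂ)^2
      + 2*((U C x y t : ℝ):ℂ)/((1 + ‖z‖^2 : ℝ):ℂ)
      - 2*Complex.I*z*w/(((Dv:ℝ):ℂ)*((1 + ‖z‖^2 : ℝ):ℂ)) := rfl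
  have habsz : ‖z‖ ^ 2 = x^2 + y^2 := by
    rw [hzdef, Complex.sq_norm, Complex.normSq_apply]
    simp only [Complex.add_re, Complex.add_im, Complex.mul_re, Complex.mul_im,
      Complex.I_re, Complex.I_im, Complex.ofReal_re, Complex.ofReal_im]
    ring
  have hDeq : Dv = (x^2-y^2)^2 + (y*(1+x^2-y^2/3))^2 + (x*(1+y^2-x^2/3)+c)^2 := by
    rw [hDdef, hgdef, hddef, gammaF, deltaF, Complex.sq_norm, Complex.sq_norm,
      Complex.normSq_apply, Complex.normSq_apply, hcdef]
    simp only [Complex.sub_re, Complex.sub_im, Complex.add_re, Complex.add_im,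
      Complex.mul_re, Complex.mul_im, Complex.I_re, Complex.I_im,
      Complex.ofReal_re, Complex.ofReal_im]
    ring
  have hDlb : (x^2+y^2)^3/36 ≤ Dv := by rw [hDeq]; exact Dlb x y c h1 h2
  have hDpos : 0 < Dv := lt_of_lt_of_le (by positivity) hDlb
  set wre : ℝ := -(y*(1+2*x^2+(2/3)*y^2+(x^2+y^2)^2/3+2*x*c)) with hwre
  set wim : ℝ := -(x*(1+2*y^2+(2/3)*x^2+(x^2+y^2)^2/3)+c*(1+y^2-x^2)) with hwim
  have hw : w = (wre:ℂ) + (wim:ℂ)*Complex.I := by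
    rw [hwdef, hzdef, hgdef, hddef, hwre, hwim, hcdef, gammaF, deltaF]
    simp only [map_sub, map_mul, Complex.conj_I, Complex.conj_ofReal]
    apply Complex.ext <;>
      simp only [pow_two, Complex.sub_re, Complex.sub_im, Complex.add_re, Complex.add_im,
        Complex.mul_re, Complex.mul_im, Complex.neg_re, Complex.neg_im,
        Complex.I_re, Complex.I_im, Complex.ofReal_re, Complex.ofReal_im] <;>
      ring
  have habsw2 : ‖w‖ ^ 2 = wre^2 + wim^2 := by
    rw [hw, Complex.sq_norm, Complex.normSq_apply]
    simp only [Complex.add_re, Complex.add_im, Complex.mul_re, Complex.mul_im,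
      Complex.I_re, Complex.I_im, Complex.ofReal_re, Complex.ofReal_im]
    ring
  have hWub : wre^2 + wim^2 ≤ (64+16*c^2)*(x^2+y^2)^5 := by
    rw [hwre, hwim]; exact Wub x y c h1 h2
  have hQlb : (x^2+y^2)^3/4 ≤ Q C x y t := by
    rw [Q, ← hcdef]; exact Qlb x y c h1 h2
  have hQpos : 0 < Q C x y t := lt_of_lt_of_le (by positivity) hQlb
  have hUb : |U C x y t| ≤ 120/(x^2+y^2) := by
    rw [U, ← hcdef, abs_div, abs_of_pos hQpos]
    have hnum : |(-(3 * ((x^2+y^2+3)*(x^2-y^2) - 6*x*c)))| ≤ 30*(x^2+y^2)^2 := by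
      rw [abs_le]
      constructor <;>
        nlinarith [sq_nonneg (x-c), sq_nonneg (x+c), sq_nonneg (x*y), sq_nonneg c,
          sq_nonneg x, sq_nonneg y, sq_nonneg (x^2+y^2), sq_nonneg (x^2-y^2),
          mul_le_mul h1 h1 (by positivity : (0:ℝ) ≤ 1) (by positivity)]
    calc |(-(3 * ((x^2+y^2+3)*(x^2-y^2) - 6*x*c)))| / Q C x y t
        ≤ (30*(x^2+y^2)^2)/((x^2+y^2)^3/4) :=
          div_le_div₀ (by positivity) hnum (by positivity) hQlb
      _ = 120/(x^2+y^2) := by field_simp; ring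
  have tri : ‖V C x y t‖ ≤
      ‖w^2/((Dv:ℝ):ℂ)^2‖
      + ‖2*((U C x y t : ℝ):ℂ)/((1 + ‖z‖^2 : ℝ):ℂ)‖
      + ‖2*Complex.I*z*w/(((Dv:ℝ):ℂ)*((1 + ‖z‖^2 : ℝ):ℂ))‖ := by
    rw [hV, sub_eq_add_neg]
    refine le_trans (norm_add_le _ _) ?_
    rw [norm_neg]
    exact add_le_add_left (norm_add_le (E := ℂ) _ _) _
  have hT1 : ‖w^2/((Dv:ℝ):ℂ)^2‖ = (wre^2 + wim^2)/Dv^2 := by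
    rw [norm_div, norm_pow, norm_pow, Complex.norm_real, Real.norm_eq_abs, abs_of_pos hDpos, habsw2]
  have hT2 : ‖2*((U C x y t : ℝ):ℂ)/((1 + ‖z‖^2 : ℝ):ℂ)‖
      = 2*|U C x y t|/(1+(x^2+y^2)) := by
    rw [norm_div, norm_mul, Complex.norm_two, Complex.norm_real, Complex.norm_real,
      Real.norm_eq_abs, Real.norm_eq_abs, habsz, abs_of_pos (by linarith : (0:ℝ) < 1 + (x^2+y^2))]
  have hT3 : ‖2*Complex.I*z*w/(((Dv:ℝ):ℂ)*((1 + ‖z‖^2 : ℝ):ℂ))‖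
      = 2*(‖z‖*‖w‖)/(Dv*(1+(x^2+y^2))) := by
    rw [norm_div, norm_mul, norm_mul, norm_mul, Complex.norm_two, Complex.norm_I,
      norm_mul, Complex.norm_real, Complex.norm_real, Real.norm_eq_abs, Real.norm_eq_abs, habsz,
      abs_of_pos hDpos, abs_of_pos (by linarith : (0:ℝ) < 1 + (x^2+y^2))]
    ring
  have hT1b : (wre^2 + wim^2)/Dv^2 ≤ 1296*(64+16*c^2)/(x^2+y^2) := by
    have step : (wre^2 + wim^2)/Dv^2 ≤ ((64+16*c^2)*(x^2+y^2)^5)/(((x^2+y^2)^3/36)^2) :=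
      div_le_div₀ (by positivity) hWub (by positivity) (pow_le_pow_left₀ (by positivity) hDlb 2)
    refine step.trans (le_of_eq ?_)
    field_simp
    ring
  have hT2b : 2*|U C x y t|/(1+(x^2+y^2)) ≤ 240/(x^2+y^2) := by
    have h1s : (1:ℝ) ≤ 1 + (x^2+y^2) := by linarith
    calc 2*|U C x y t|/(1+(x^2+y^2)) ≤ (2*(120/(x^2+y^2)))/1 :=
          div_le_div₀ (by positivity) (by linarith) one_pos h1s
      _ = 240/(x^2+y^2) := by ring
  have hzw : ‖z‖ * ‖w‖ ≤ B*(x^2+y^2)^3 := by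
    have hsq : (‖z‖ * ‖w‖)^2 ≤ (B*(x^2+y^2)^3)^2 := by
      have e : (‖z‖ * ‖w‖)^2 = (x^2+y^2)*(wre^2+wim^2) := by
        rw [mul_pow, habsz, habsw2]
      rw [e, mul_pow, hBsq]
      calc (x^2+y^2)*(wre^2+wim^2) ≤ (x^2+y^2)*((64+16*c^2)*(x^2+y^2)^5) :=
            mul_le_mul_of_nonneg_left hWub hspos.le
        _ = (64+16*c^2)*((x^2+y^2)^3)^2 := by ring
    exact le_of_pow_le_pow_left₀ two_ne_zero (by positivity) hsq
  have hT3b : 2*(‖z‖*‖w‖)/(Dv*(1+(x^2+y^2))) ≤ 72*B/(x^2+y^2) := by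
    have hden : ((x^2+y^2)^3/36)*(x^2+y^2) ≤ Dv*(1+(x^2+y^2)) :=
      mul_le_mul hDlb (by linarith) hspos.le hDpos.le
    calc 2*(‖z‖*‖w‖)/(Dv*(1+(x^2+y^2)))
        ≤ (2*(B*(x^2+y^2)^3))/(((x^2+y^2)^3/36)*(x^2+y^2)) :=
          div_le_div₀ (by positivity) (by linarith) (by positivity) hden
      _ = 72*B/(x^2+y^2) := by field_simp; ring
  have hsum : (1296*(64+16*c^2) + 240 + 72*B)/(x^2+y^2)
      = 1296*(64+16*c^2)/(x^2+y^2) + 240/(x^2+y^2) + 72*B/(x^2+y^2) := by ring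
  rw [hsum]
  calc ‖V C x y t‖
      ≤ _ + _ + _ := tri
    _ ≤ 1296*(64+16*c^2)/(x^2+y^2) + 240/(x^2+y^2) + 72*B/(x^2+y^2) := by
        rw [hT1, hT2, hT3]
        exact add_le_add (add_le_add hT1b hT2b) hT3b
end

section
/- Let C be a real constant, Q(x,y,t) = (x²+y²)³ + 3(x⁴+y⁴) + 18x²y² + 9(x²+y²) + 9(C−t)² + (6x³ − 18xy² − 18x)(C−t), and U(x,y,t) = −3((x²+y²+3)(x²−y²) − 6x(C−t))/Q(x,y,t). Then the function (x,y) ↦ U(x,y,C)² (defined for (x,y) ≠ (0,0)) is integrable on ℝ² and ∫_{ℝ²} U(x,y,C)² dx dy = 2π. -/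
open MeasureTheory Real

/- ### Auxiliary lemmas -/

lemma two_theta_deriv (θ : ℝ) : HasDerivAt (fun θ : ℝ => 2*θ) 2 θ := by
  simpa using (hasDerivAt_id θ).const_mul (2:ℝ)

lemma sin2_deriv (θ : ℝ) : HasDerivAt (fun θ : ℝ => Real.sin (2*θ)) (2 * Real.cos (2*θ)) θ := by
  simpa [mul_comm] using (two_theta_deriv θ).sin

lemma cos2_deriv (θ : ℝ) : HasDerivAt (fun θ : ℝ => Real.cos (2*θ)) (-(2 * Real.sin (2*θ))) θ := by
  simpa [mul_comm] using (two_theta_deriv θ).cos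

lemma Dpos {k : ℝ} (hk : 0 < k) (s c : ℝ) (h : s^2 + c^2 = 1) : 0 < c^2 + k * s^2 := by
  rcases le_or_gt (s^2) (1/2) with hs | hs
  · nlinarith [sq_nonneg s, sq_nonneg c]
  · nlinarith [sq_nonneg s, sq_nonneg c]

/-- Smooth global antiderivative of `θ ↦ cos²2θ/(cos²2θ + k² sin²2θ)²`. -/
noncomputable def Haux (k θ : ℝ) : ℝ :=
  Real.sin (2*θ) * Real.cos (2*θ) / (4*((Real.cos (2*θ))^2 + k^2*(Real.sin (2*θ))^2))
  + (1/(4*k)) * (2*θ + Real.arctan ((k-1) * (Real.sin (2*θ) * Real.cos (2*θ)) /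
      ((Real.cos (2*θ))^2 + k*(Real.sin (2*θ))^2)))

lemma Haux_deriv {k : ℝ} (hk : 0 < k) (θ : ℝ) :
    HasDerivAt (Haux k)
      ((Real.cos (2*θ))^2 / ((Real.cos (2*θ))^2 + k^2*(Real.sin (2*θ))^2)^2) θ := by
  have hcirc : (Real.sin (2*θ))^2 + (Real.cos (2*θ))^2 = 1 := Real.sin_sq_add_cos_sq _
  have hD : (0:ℝ) < (Real.cos (2*θ))^2 + k^2*(Real.sin (2*θ))^2 :=
    Dpos (by positivity) _ _ hcirc
  have hDk : (0:ℝ) < (Real.cos (2*θ))^2 + k*(Real.sin (2*θ))^2 := Dpos hk _ _ hcirc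
  have hsc : HasDerivAt (fun θ : ℝ => Real.sin (2*θ) * Real.cos (2*θ))
      (2 * Real.cos (2*θ) * Real.cos (2*θ) + Real.sin (2*θ) * -(2 * Real.sin (2*θ))) θ :=
    (sin2_deriv θ).mul (cos2_deriv θ)
  have hDd : HasDerivAt (fun θ : ℝ => 4*((Real.cos (2*θ))^2 + k^2*(Real.sin (2*θ))^2))
      (4*((2:ℕ) * (Real.cos (2*θ))^1 * -(2 * Real.sin (2*θ))
        + k^2*((2:ℕ) * (Real.sin (2*θ))^1 * (2 * Real.cos (2*θ))))) θ :=
    (((cos2_deriv θ).pow 2).add (((sin2_deriv θ).pow 2).const_mul (k^2))).const_mul 4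
  have hT1 := hsc.div hDd (by positivity)
  have hDkd : HasDerivAt (fun θ : ℝ => (Real.cos (2*θ))^2 + k*(Real.sin (2*θ))^2)
      ((2:ℕ) * (Real.cos (2*θ))^1 * -(2 * Real.sin (2*θ))
        + k*((2:ℕ) * (Real.sin (2*θ))^1 * (2 * Real.cos (2*θ)))) θ :=
    ((cos2_deriv θ).pow 2).add (((sin2_deriv θ).pow 2).const_mul k)
  have hA := (hsc.const_mul (k-1)).div hDkd (ne_of_gt hDk)
  have hAt := hA.arctan
  have hT2 := ((two_theta_deriv θ).add hAt).const_mul (1/(4*k))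
  have total := hT1.add hT2
  refine total.congr_deriv (Eq.symm ?_)
  simp only [Pi.div_apply]
  set s := Real.sin (2*θ) with hs
  set c := Real.cos (2*θ) with hc
  field_simp
  linear_combination (-4*c^2*s^4*k^3 - 4*c^4*s^2*k - 4*c^4*s^2*k^3 - 4*c^6*k) * hcirc

lemma core_integral {k : ℝ} (hk : 0 < k) :
    ∫ θ in (-π)..π, (Real.cos (2*θ))^2 / ((Real.cos (2*θ))^2 + k^2*(Real.sin (2*θ))^2)^2
      = π / k := by
  have hcont : Continuous (fun θ : ℝ =>
      (Real.cos (2*θ))^2 / ((Real.cos (2*θ))^2 + k^2*(Real.sin (2*θ))^2)^2) := by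
    apply Continuous.div
    · fun_prop
    · fun_prop
    · intro θ
      have hD : (0:ℝ) < (Real.cos (2*θ))^2 + k^2*(Real.sin (2*θ))^2 :=
        Dpos (by positivity) _ _ (Real.sin_sq_add_cos_sq _)
      positivity
  rw [intervalIntegral.integral_eq_sub_of_hasDerivAt (fun θ _ => Haux_deriv hk θ)
    (hcont.intervalIntegrable _ _)]
  have h2 : Real.sin (2*(-π)) = 0 := by
    rw [mul_neg, Real.sin_neg, Real.sin_two_pi, neg_zero]
  have h3 : Real.cos (2*(-π)) = 1 := by
    rw [mul_neg, Real.cos_neg, Real.cos_two_pi]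
  simp only [Haux, Real.sin_two_pi, Real.cos_two_pi, h2, h3]
  rw [show (k-1) * ((0:ℝ) * 1) / (1^2 + k*0^2) = 0 by ring]
  simp only [Real.arctan_zero]
  field_simp
  ring

lemma U_at_C (C x y : ℝ) : U C x y C = -(3*((x^2+y^2+3)*(x^2-y^2))) /
    ((x^2+y^2)^3 + 3*(x^4+y^4) + 18*x^2*y^2 + 9*(x^2+y^2)) := by
  unfold U Q
  rw [sub_self]
  norm_num

lemma U_polar_sq (C r θ k : ℝ) (hr : 0 < r) (hk : 0 < k)
    (hb : (r^2+3)^2 = k^2*(r^4+3*r^2+9)) :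
    r * (U C (r*Real.cos θ) (r*Real.sin θ) C)^2
      = (9*r*(r^2+3)^2/(r^4+3*r^2+9)^2) *
        ((Real.cos (2*θ))^2/((Real.cos (2*θ))^2 + k^2*(Real.sin (2*θ))^2)^2) := by
  rw [U_at_C, Real.cos_two_mul', Real.sin_two_mul]
  set s := Real.sin θ
  set q := Real.cos θ
  have h : s^2 + q^2 = 1 := Real.sin_sq_add_cos_sq θ
  have hQp : ((r*q)^2+(r*s)^2)^3 + 3*((r*q)^4+(r*s)^4) + 18*(r*q)^2*(r*s)^2 + 9*((r*q)^2+(r*s)^2)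
      = r^2 * ((r^4+3*r^2+9)*(q^2-s^2)^2 + (r^2+3)^2*(2*s*q)^2) := by
    linear_combination (-9*q^2*r^2 + q^4*r^6 - 9*s^2*r^2 + 2*s^2*q^2*r^6 + s^4*r^6) * h
  rw [hQp]
  have hE1 : (2*s*q)^2 + (q^2-s^2)^2 = 1 := by linear_combination (s^2+q^2+1) * h
  have hD : 0 < (q^2-s^2)^2 + k^2*(2*s*q)^2 := Dpos (by positivity) _ _ hE1
  have hcc : (0:ℝ) < r^4+3*r^2+9 := by positivity
  have hfact : r^2 * ((r^4+3*r^2+9)*(q^2-s^2)^2 + (r^2+3)^2*(2*s*q)^2)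
      = r^2*(r^4+3*r^2+9)*((q^2-s^2)^2 + k^2*(2*s*q)^2) := by
    linear_combination (r^2*(2*s*q)^2) * hb
  rw [hfact]
  have hnum : ((r*q)^2+(r*s)^2+3)*((r*q)^2-(r*s)^2) = (r^2+3)*(r^2*(q^2-s^2)) := by
    linear_combination (q^2*r^4 - s^2*r^4) * h
  rw [hnum]
  field_simp
  ring

lemma inner_integral (C : ℝ) {r : ℝ} (hr : 0 < r) :
    ∫ θ in Set.Ioo (-π) π, r * (U C (r*Real.cos θ) (r*Real.sin θ) C)^2
      = 9*π*r*(r^2+3)/((r^4+3*r^2+9)*Real.sqrt (r^4+3*r^2+9)) := by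
  have hccpos : (0:ℝ) < r^4+3*r^2+9 := by positivity
  set sc := Real.sqrt (r^4+3*r^2+9) with hscdef
  have hscpos : 0 < sc := Real.sqrt_pos.mpr hccpos
  have hsc2 : sc^2 = r^4+3*r^2+9 := Real.sq_sqrt hccpos.le
  set k := (r^2+3)/sc with hkdef
  have hk : 0 < k := by positivity
  have hb : (r^2+3)^2 = k^2*(r^4+3*r^2+9) := by
    rw [hkdef, div_pow, hsc2, div_mul_cancel₀ _ (ne_of_gt hccpos)]
  rw [← MeasureTheory.integral_Ioc_eq_integral_Ioo,
    ← intervalIntegral.integral_of_le (by linarith [Real.pi_pos] : -π ≤ π),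
    intervalIntegral.integral_congr (g := fun θ => (9*r*(r^2+3)^2/(r^4+3*r^2+9)^2) *
      ((Real.cos (2*θ))^2/((Real.cos (2*θ))^2 + k^2*(Real.sin (2*θ))^2)^2))
      (fun θ _ => U_polar_sq C r θ k hr hk hb),
    intervalIntegral.integral_const_mul, core_integral hk, hkdef]
  field_simp
  ring_nf
  linear_combination hsc2

/-- The radial antiderivative. -/
noncomputable def Raux (r : ℝ) : ℝ := π*(r^2-3)/Real.sqrt (r^4+3*r^2+9)

lemma Raux_deriv (r : ℝ) :
    HasDerivAt Raux (9*π*r*(r^2+3)/((r^4+3*r^2+9)*Real.sqrt (r^4+3*r^2+9))) r := by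
  have hw : (0:ℝ) < r^4+3*r^2+9 := by positivity
  have hSpos : 0 < Real.sqrt (r^4+3*r^2+9) := Real.sqrt_pos.mpr hw
  have hS2 : (Real.sqrt (r^4+3*r^2+9))^2 = r^4+3*r^2+9 := Real.sq_sqrt hw.le
  have hwd : HasDerivAt (fun r : ℝ => r^4+3*r^2+9) (4*r^3+3*(2*r)) r := by
    have h1 : HasDerivAt (fun r : ℝ => r^4) (4*r^3) r := by
      simpa using (hasDerivAt_pow 4 r)
    have h2 : HasDerivAt (fun r : ℝ => 3*r^2) (3*(2*r)) r := by
      simpa using ((hasDerivAt_pow 2 r)).const_mul (3:ℝ)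
    simpa using (h1.add h2).add_const 9
  have hSd : HasDerivAt (fun r : ℝ => Real.sqrt (r^4+3*r^2+9))
      ((4*r^3+3*(2*r))/(2*Real.sqrt (r^4+3*r^2+9))) r := hwd.sqrt (by positivity)
  have hnum : HasDerivAt (fun r : ℝ => π*(r^2-3)) (π*(2*r)) r := by
    simpa using ((hasDerivAt_pow 2 r).sub_const 3).const_mul π
  have total := hnum.div hSd (ne_of_gt hSpos)
  refine total.congr_deriv (Eq.symm ?_)
  rw [hS2]
  generalize Real.sqrt (r^4+3*r^2+9) = S at *
  field_simp
  linear_combination (-4*r) * hS2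

lemma Raux_tendsto : Filter.Tendsto Raux Filter.atTop (nhds π) := by
  have hp : Filter.Tendsto (fun r : ℝ => r^2) Filter.atTop Filter.atTop :=
    Filter.tendsto_pow_atTop two_ne_zero
  have h1 : Filter.Tendsto (fun r : ℝ => (r^2)⁻¹) Filter.atTop (nhds 0) :=
    hp.inv_tendsto_atTop
  have hcont : ContinuousAt (fun t : ℝ => π*(1-3*t)/Real.sqrt (1+3*t+9*t^2)) 0 := by
    apply ContinuousAt.div
    · fun_prop
    · fun_prop
    · simp
  have h2 := hcont.tendsto.comp h1
  norm_num [Function.comp] at h2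
  apply h2.congr'
  filter_upwards [Filter.eventually_gt_atTop (0:ℝ)] with r hr
  have hr2 : (0:ℝ) < r^2 := by positivity
  have hw : (0:ℝ) < r^4+3*r^2+9 := by positivity
  have hSpos : 0 < Real.sqrt (r^4+3*r^2+9) := Real.sqrt_pos.mpr hw
  have key : 1+3*(1/r^2)+9*(1/r^2)^2 = (r^4+3*r^2+9)/(r^2)^2 := by field_simp
  simp only [Function.comp_apply, ← one_div]
  rw [key, Real.sqrt_div hw.le, Real.sqrt_sq hr2.le]
  unfold Raux
  field_simp

lemma Usq_le (C x y : ℝ) : (U C x y C)^2 ≤ 16/(1+(x^2+y^2))^2 := by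
  rw [U_at_C]
  rcases eq_or_ne (x^2+y^2) 0 with h0 | h0
  · have hx : x = 0 := by nlinarith [sq_nonneg x, sq_nonneg y]
    have hy : y = 0 := by nlinarith [sq_nonneg x, sq_nonneg y]
    subst hx; subst hy
    norm_num
  · have hu : 0 < x^2+y^2 := lt_of_le_of_ne (by positivity) (Ne.symm h0)
    have hc : (0:ℝ) < (x^2+y^2)^2+3*(x^2+y^2)+9 := by positivity
    have h2 : (x^2+y^2)*((x^2+y^2)^2+3*(x^2+y^2)+9)
        ≤ (x^2+y^2)^3 + 3*(x^4+y^4) + 18*x^2*y^2 + 9*(x^2+y^2) := by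
      nlinarith [sq_nonneg (x*y)]
    have hQpos : 0 < (x^2+y^2)^3 + 3*(x^4+y^4) + 18*x^2*y^2 + 9*(x^2+y^2) :=
      lt_of_lt_of_le (by positivity) h2
    rw [div_pow, div_le_div_iff₀ (by positivity) (by positivity)]
    have h1 : (x^2-y^2)^2 ≤ (x^2+y^2)^2 := by nlinarith [sq_nonneg (x*y)]
    have h3 : 3*((x^2+y^2)+3)*(1+(x^2+y^2)) ≤ 4*((x^2+y^2)^2+3*(x^2+y^2)+9) := by
      nlinarith [sq_nonneg (x^2+y^2)]
    have step1 : (-(3*((x^2+y^2+3)*(x^2-y^2))))^2 * (1+(x^2+y^2))^2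
        ≤ ((x^2+y^2)*(3*((x^2+y^2)+3)*(1+(x^2+y^2))))^2 := by
      have := mul_le_mul_of_nonneg_left h1
        (show (0:ℝ) ≤ 9*(x^2+y^2+3)^2*(1+(x^2+y^2))^2 by positivity)
      nlinarith [this]
    have step2 : ((x^2+y^2)*(3*((x^2+y^2)+3)*(1+(x^2+y^2))))^2
        ≤ ((x^2+y^2)*(4*((x^2+y^2)^2+3*(x^2+y^2)+9)))^2 := by
      have hnn : (0:ℝ) ≤ (x^2+y^2)*(3*((x^2+y^2)+3)*(1+(x^2+y^2))) := by positivity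
      have hle : (x^2+y^2)*(3*((x^2+y^2)+3)*(1+(x^2+y^2)))
          ≤ (x^2+y^2)*(4*((x^2+y^2)^2+3*(x^2+y^2)+9)) :=
        mul_le_mul_of_nonneg_left h3 hu.le
      nlinarith [hle, hnn]
    have step3 : ((x^2+y^2)*(4*((x^2+y^2)^2+3*(x^2+y^2)+9)))^2
        ≤ 16 * ((x^2+y^2)^3 + 3*(x^4+y^4) + 18*x^2*y^2 + 9*(x^2+y^2))^2 := by
      have hnn : (0:ℝ) ≤ (x^2+y^2)*((x^2+y^2)^2+3*(x^2+y^2)+9) := by positivity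
      nlinarith [h2, hnn]
    calc (-(3*((x^2+y^2+3)*(x^2-y^2))))^2 * (1+(x^2+y^2))^2
        ≤ ((x^2+y^2)*(3*((x^2+y^2)+3)*(1+(x^2+y^2))))^2 := step1
      _ ≤ ((x^2+y^2)*(4*((x^2+y^2)^2+3*(x^2+y^2)+9)))^2 := step2
      _ ≤ 16 * ((x^2+y^2)^3 + 3*(x^4+y^4) + 18*x^2*y^2 + 9*(x^2+y^2))^2 := step3

lemma U_meas (C : ℝ) : Measurable (fun p : ℝ × ℝ => (U C p.1 p.2 C)^2) := by
  unfold U Q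
  apply Measurable.pow
  · apply Measurable.div <;> fun_prop
  · fun_prop

lemma U_integrable (C : ℝ) :
    Integrable (fun p : ℝ × ℝ => (U C p.1 p.2 C)^2) (volume : Measure (ℝ × ℝ)) := by
  have hdim : ((Module.finrank ℝ (ℝ × ℝ) : ℝ)) < 4 := by
    norm_num [Module.finrank_prod, Module.finrank_self]
  have hbase := integrable_one_add_norm (E := ℝ × ℝ) (μ := volume) (r := 4) hdim
  apply (hbase.const_mul 64).mono ((U_meas C).aestronglyMeasurable)
  filter_upwards with p
  have hb := Usq_le C p.1 p.2
  have hnp : (0:ℝ) ≤ ‖p‖ := norm_nonneg p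
  have hsq : ‖p‖^2 ≤ p.1^2 + p.2^2 := by
    rcases max_cases ‖p.1‖ ‖p.2‖ with ⟨hm, _⟩ | ⟨hm, _⟩ <;>
      rw [Prod.norm_def, hm] <;>
      simp only [Real.norm_eq_abs, sq_abs] <;>
      nlinarith [sq_nonneg p.1, sq_nonneg p.2]
  have hr1 : (U C p.1 p.2 C)^2 ≤ 16/(1+‖p‖^2)^2 := by
    refine le_trans hb ?_
    rw [div_le_div_iff₀ (by positivity) (by positivity)]
    nlinarith [hsq, sq_nonneg ‖p‖, sq_nonneg (p.1^2+p.2^2)]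
  have hr2 : 16/(1+‖p‖^2)^2 ≤ 64/(1+‖p‖)^4 := by
    rw [div_le_div_iff₀ (by positivity) (by positivity)]
    nlinarith [sq_nonneg (1-‖p‖), sq_nonneg ((1-‖p‖)*(1+‖p‖)), hnp]
  have hrpow : (1+‖p‖) ^ (-(4:ℝ)) = ((1+‖p‖)^4)⁻¹ := by
    rw [Real.rpow_neg (by positivity), show ((4:ℝ)) = ((4:ℕ):ℝ) by norm_num,
      Real.rpow_natCast]
  rw [Real.norm_eq_abs, abs_of_nonneg (sq_nonneg _), Real.norm_eq_abs]
  rw [hrpow]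
  rw [abs_of_nonneg (by positivity : (0:ℝ) ≤ 64 * ((1+‖p‖)^4)⁻¹)]
  calc (U C p.1 p.2 C)^2 ≤ 16/(1+‖p‖^2)^2 := hr1
    _ ≤ 64/(1+‖p‖)^4 := hr2
    _ = 64 * ((1+‖p‖)^4)⁻¹ := by rw [div_eq_mul_inv]

lemma phi_integrableOn : MeasureTheory.IntegrableOn
    (fun r : ℝ => 16*r/(1+r^2)^2) (Set.Ioi (0:ℝ)) := by
  have hderiv : ∀ x : ℝ,
      HasDerivAt (fun r : ℝ => -8/(1+r^2)) (16*x/(1+x^2)^2) x := by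
    intro x
    have hd : HasDerivAt (fun r : ℝ => 1+r^2) (2*x) x := by
      simpa using (hasDerivAt_pow 2 x).const_add 1
    have := (hasDerivAt_const x (-8:ℝ)).div hd (by positivity)
    refine this.congr_deriv (Eq.symm ?_)
    field_simp
    ring
  apply MeasureTheory.integrableOn_Ioi_deriv_of_nonneg
  · exact ((hderiv 0).continuousAt.continuousWithinAt)
  · exact fun x _ => hderiv x
  · intro x hx
    have : (0:ℝ) < x := hx
    positivity
  · show Filter.Tendsto (fun r : ℝ => -8/(1+r^2)) Filter.atTop (nhds 0)
    have h1 : Filter.Tendsto (fun r : ℝ => 1+r^2) Filter.atTop Filter.atTop :=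
      Filter.tendsto_atTop_add_const_left _ 1 (Filter.tendsto_pow_atTop two_ne_zero)
    have h2 := h1.inv_tendsto_atTop.const_mul (-8:ℝ)
    simpa [div_eq_mul_inv] using h2

theorem U_sq_integral_singular_time (C : ℝ) :
    Integrable (fun p : ℝ × ℝ => (U C p.1 p.2 C)^2) (volume : Measure (ℝ × ℝ)) ∧
    ∫ p : ℝ × ℝ, (U C p.1 p.2 C)^2 = 2 * π := by
  refine ⟨U_integrable C, ?_⟩
  rw [← integral_comp_polarCoord_symm (fun p : ℝ × ℝ => (U C p.1 p.2 C)^2)]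
  have htarget : polarCoord.target = Set.Ioi (0:ℝ) ×ˢ Set.Ioo (-π) π := rfl
  have hsymm : ∀ p : ℝ × ℝ, polarCoord.symm p = (p.1 * Real.cos p.2, p.1 * Real.sin p.2) :=
    fun p => rfl
  have hmeas2 : AEStronglyMeasurable
      (fun p : ℝ × ℝ => p.1 • (U C (polarCoord.symm p).1 (polarCoord.symm p).2 C)^2)
      (volume.restrict polarCoord.target) := by
    apply Measurable.aestronglyMeasurable
    apply Measurable.smul measurable_fst
    apply (U_meas C).comp
    have hc : Continuous (fun p : ℝ × ℝ => (p.1 * Real.cos p.2, p.1 * Real.sin p.2)) := by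
      fun_prop
    exact hc.measurable
  have hprod : Integrable (fun z : ℝ × ℝ => (16*z.1/(1+z.1^2)^2) * (1:ℝ))
      ((volume.restrict (Set.Ioi (0:ℝ))).prod (volume.restrict (Set.Ioo (-π) π))) :=
    phi_integrableOn.mul_prod (integrable_const 1)
  rw [Measure.prod_restrict] at hprod
  have hbound : Integrable (fun z : ℝ × ℝ => 16*z.1/(1+z.1^2)^2)
      (volume.restrict polarCoord.target) := by
    have : (volume : Measure (ℝ × ℝ)) = Measure.prod volume volume :=
      Measure.volume_eq_prod ℝ ℝ
    rw [htarget, this]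
    simpa using hprod
  have hIntOn : IntegrableOn
      (fun p : ℝ × ℝ => p.1 • (U C (polarCoord.symm p).1 (polarCoord.symm p).2 C)^2)
      polarCoord.target volume := by
    apply hbound.mono hmeas2
    rw [htarget]
    filter_upwards [MeasureTheory.ae_restrict_mem
      ((measurableSet_Ioi).prod (measurableSet_Ioo))] with p hp
    have hr : 0 < p.1 := hp.1
    have hxy : (p.1*Real.cos p.2)^2 + (p.1*Real.sin p.2)^2 = p.1^2 := by
      linear_combination p.1^2 * (Real.sin_sq_add_cos_sq p.2)
    have hb := Usq_le C (p.1*Real.cos p.2) (p.1*Real.sin p.2)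
    rw [hxy] at hb
    rw [hsymm p, smul_eq_mul, Real.norm_eq_abs, Real.norm_eq_abs,
      abs_of_nonneg (by positivity : (0:ℝ) ≤ p.1 * (U C (p.1*Real.cos p.2) (p.1*Real.sin p.2) C)^2),
      abs_of_nonneg (by positivity : (0:ℝ) ≤ 16*p.1/(1+p.1^2)^2)]
    calc p.1 * (U C (p.1*Real.cos p.2) (p.1*Real.sin p.2) C)^2
        ≤ p.1 * (16/(1+p.1^2)^2) := mul_le_mul_of_nonneg_left hb hr.le
      _ = 16*p.1/(1+p.1^2)^2 := by ring
  rw [htarget] at hIntOn ⊢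
  rw [show (volume : Measure (ℝ × ℝ)) = Measure.prod volume volume from Measure.volume_eq_prod ℝ ℝ] at hIntOn ⊢
  rw [MeasureTheory.setIntegral_prod _ hIntOn]
  have hinner : Set.EqOn
      (fun r : ℝ => ∫ θ in Set.Ioo (-π) π,
        (r, θ).1 • (U C (polarCoord.symm (r, θ)).1 (polarCoord.symm (r, θ)).2 C)^2)
      (fun r : ℝ => 9*π*r*(r^2+3)/((r^4+3*r^2+9)*Real.sqrt (r^4+3*r^2+9)))
      (Set.Ioi (0:ℝ)) := by
    intro r hr
    simp only [hsymm, smul_eq_mul]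
    exact inner_integral C hr
  rw [MeasureTheory.setIntegral_congr_fun (measurableSet_Ioi) hinner]
  have hpos : ∀ x ∈ Set.Ioi (0:ℝ),
      0 ≤ 9*π*x*(x^2+3)/((x^4+3*x^2+9)*Real.sqrt (x^4+3*x^2+9)) := by
    intro x hx
    have hx0 : (0:ℝ) < x := hx
    have hπ := Real.pi_pos
    positivity
  rw [MeasureTheory.integral_Ioi_of_hasDerivAt_of_nonneg
    ((Raux_deriv 0).continuousAt.continuousWithinAt) (fun x _ => Raux_deriv x) hpos Raux_tendsto]
  have h9 : Real.sqrt ((0:ℝ)^4+3*0^2+9) = 3 := by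
    rw [show ((0:ℝ)^4+3*0^2+9) = 3^2 by norm_num, Real.sqrt_sq (by norm_num : (0:ℝ) ≤ 3)]
  unfold Raux
  rw [h9]
  ring
end

section
/- Let C be a real constant, Q(x,y,t) = (x²+y²)³ + 3(x⁴+y⁴) + 18x²y² + 9(x²+y²) + 9(C−t)² + (6x³ − 18xy² − 18x)(C−t), and U(x,y,t) = −3((x²+y²+3)(x²−y²) − 6x(C−t))/Q(x,y,t). Then for every fixed t ≠ C, the function (x,y) ↦ U(x,y,t) is real-analytic on all of ℝ², while the function (x,y) ↦ U(x,y,C) is real-analytic on ℝ² \ {(0,0)} and is undefined at (0,0). -/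
lemma Q_pos (C x y t : ℝ) (h : x ≠ 0 ∨ y ≠ 0 ∨ t ≠ C) : 0 < Q C x y t := by
  unfold Q
  rcases h with hx | hy | ht
  · have h4 : 0 < x^4 := by positivity
    nlinarith [sq_nonneg (9*(C-t)+3*x*(x^2-3*y^2-3)), sq_nonneg (y*(3*x^2-y^2)),
      sq_nonneg y, sq_nonneg (y^2)]
  · have h2 : 0 < y^2 := by positivity
    nlinarith [sq_nonneg (9*(C-t)+3*x*(x^2-3*y^2-3)), sq_nonneg (y*(3*x^2-y^2)),
      sq_nonneg (x^2), sq_nonneg (y^2)]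
  · have hs : 0 < (C-t)^2 := by
      have : C - t ≠ 0 := sub_ne_zero.mpr (Ne.symm ht)
      positivity
    by_cases hx : x = 0
    · subst hx
      nlinarith [sq_nonneg y, sq_nonneg (y^2), sq_nonneg (y^3)]
    · have h4 : 0 < x^4 := by positivity
      nlinarith [sq_nonneg (9*(C-t)+3*x*(x^2-3*y^2-3)), sq_nonneg (y*(3*x^2-y^2)),
        sq_nonneg y, sq_nonneg (y^2)]

lemma num_analytic (C t : ℝ) (p : ℝ × ℝ) :
    AnalyticAt ℝ (fun p : ℝ × ℝ =>
      -(3 * ((p.1^2 + p.2^2 + 3) * (p.1^2 - p.2^2) - 6*p.1*(C - t)))) p := by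
  have h1 : AnalyticAt ℝ (fun p : ℝ × ℝ => p.1) p := analyticAt_fst
  have h2 : AnalyticAt ℝ (fun p : ℝ × ℝ => p.2) p := analyticAt_snd
  exact (analyticAt_const.mul (((((h1.pow 2).add (h2.pow 2)).add analyticAt_const).mul
    ((h1.pow 2).sub (h2.pow 2))).sub (((analyticAt_const.mul h1).mul analyticAt_const)))).neg

lemma Q_analytic (C t : ℝ) (p : ℝ × ℝ) :
    AnalyticAt ℝ (fun p : ℝ × ℝ => Q C p.1 p.2 t) p := by
  unfold Q
  have h1 : AnalyticAt ℝ (fun p : ℝ × ℝ => p.1) p := analyticAt_fst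
  have h2 : AnalyticAt ℝ (fun p : ℝ × ℝ => p.2) p := analyticAt_snd
  exact ((((((h1.pow 2).add (h2.pow 2)).pow 3).add (analyticAt_const.mul ((h1.pow 4).add
    (h2.pow 4)))).add ((analyticAt_const.mul (h1.pow 2)).mul (h2.pow 2))).add
    (analyticAt_const.mul ((h1.pow 2).add (h2.pow 2)))).add analyticAt_const |>.add
    ((((analyticAt_const.mul (h1.pow 3)).sub ((analyticAt_const.mul h1).mul (h2.pow 2))).sub
    (analyticAt_const.mul h1)).mul analyticAt_const)

lemma U_analyticAt (C t : ℝ) (p : ℝ × ℝ) (h : Q C p.1 p.2 t ≠ 0) :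
    AnalyticAt ℝ (fun p : ℝ × ℝ => U C p.1 p.2 t) p := by
  unfold U
  exact (num_analytic C t p).div (Q_analytic C t p) h

theorem U_analytic_at_fixed_time (C : ℝ) :
    (∀ t : ℝ, t ≠ C →
      AnalyticOnNhd ℝ (fun p : ℝ × ℝ => U C p.1 p.2 t) Set.univ) ∧
    AnalyticOnNhd ℝ (fun p : ℝ × ℝ => U C p.1 p.2 C) {p : ℝ × ℝ | p ≠ (0, 0)} ∧
    Q C 0 0 C = 0 := by
  refine ⟨fun t ht p _ => U_analyticAt C t p
    (Q_pos C p.1 p.2 t (Or.inr (Or.inr ht))).ne', fun p hp => ?_, by simp [Q]⟩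
  · refine U_analyticAt C C p (Q_pos C p.1 p.2 C ?_).ne'
    by_cases hx : p.1 = 0
    · exact Or.inr (Or.inl fun hy => hp (Prod.ext hx hy))
    · exact Or.inl hx
end
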